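/- Let G and G' be finite groups of equal order and let p be a winning correlation for the (G,G')-bijection game. Then the following are equivalent: (1) there exists a classical winning correlation q, i.e., a convex combination q = ∑_{π∈bij(G,G')} α_π·p_π with α_π ≥ 0 and ∑_π α_π = 1, such that for all b,d ∈ G and a,c ∈ G', q(b,d|a,c) > 0 implies p(b,d|a,c) > 0; (2) there exists a bijection π ∈ bij(G,G') such that p(π(a),π(c)|a,c) ≠ 0 for all a,c ∈ G'. (Condition (2) says the support graph of p contains a clique of size |G|, so p is strongly nonlocal if and only if its support graph has no clique of size |G|.) -/
import Mathlib


open scoped BigOperators Classical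

/-- A winning correlation for the `(G,G')`-bijection game: nonnegative values,
the outputs sum to one for each pair of inputs, and the value is zero whenever
exactly one of `b = d` and `a = c` holds. -/
def IsWinningCorrelation {G G' : Type*} [Group G] [Group G'] [Fintype G] [Fintype G']
    (p : G → G → G' → G' → ℝ) : Prop :=
  (∀ (b d : G) (a c : G'), 0 ≤ p b d a c) ∧
  (∀ a c : G', (∑ b : G, ∑ d : G, p b d a c) = 1) ∧
  (∀ (b d : G) (a c : G'), ¬(b = d ↔ a = c) → p b d a c = 0)

/-- Membership in `B̂(G,G')`: a winning correlation whose sum over all pairs of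
inputs is `1` for every pair of outputs. -/
def MemBhat {G G' : Type*} [Group G] [Group G'] [Fintype G] [Fintype G']
    (p : G → G → G' → G' → ℝ) : Prop :=
  IsWinningCorrelation p ∧ ∀ b d : G, (∑ a : G', ∑ c : G', p b d a c) = 1

/-- A `(G,G')`-invariant correlation: an element of `B̂(G,G')` whose values depend only
on the quotients `b⁻¹ * d ∈ G` and `a⁻¹ * c ∈ G'`. -/
def IsInvariantCorrelation {G G' : Type*} [Group G] [Group G'] [Fintype G] [Fintype G']
    (p : G → G → G' → G' → ℝ) : Prop :=
  MemBhat p ∧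
  ∀ (b d b' d' : G) (a c a' c' : G'),
    b⁻¹ * d = b'⁻¹ * d' → a⁻¹ * c = a'⁻¹ * c' → p b d a c = p b' d' a' c'

/-- The correlation `p_G`. -/
noncomputable def pUnif (G : Type*) [Group G] [Fintype G] : G → G → G → G → ℝ :=
  fun b d a c => if b⁻¹ * d = a⁻¹ * c then ((Fintype.card G : ℝ))⁻¹ else 0

/-- Composition of correlations. -/
def corComp {G G' G'' : Type*} [Fintype G']
    (p₁ : G → G → G' → G' → ℝ) (p₂ : G' → G' → G'' → G'' → ℝ) :
    G → G → G'' → G'' → ℝ :=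
  fun b d a c => ∑ x : G', ∑ y : G', p₁ b d x y * p₂ x y a c

/-- The correlation matrix `D^p` of a `(G,G')`-invariant correlation `p`:
`D^p_{x,y} = |G| ⬝ p(b,d|a,c)` for any `b,d,a,c` with `b⁻¹d = x`, `a⁻¹c = y`
(here realized with `b = a = e`). -/
noncomputable def corrMatrix {G G' : Type*} [Group G] [Group G'] [Fintype G]
    (p : G → G → G' → G' → ℝ) : Matrix G G' ℝ :=
  Matrix.of fun x y => (Fintype.card G : ℝ) * p 1 x 1 y

/-- The deterministic correlation `p_π` associated with a bijection `π` from `G'` to `G`. -/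
noncomputable def detCor {G G' : Type*} (π : G' ≃ G) : G → G → G' → G' → ℝ :=
  fun b d a c => if b = π a ∧ d = π c then 1 else 0

/-- The permutation matrix `P^π` of a bijection `π` from `G'` to `G`. -/
noncomputable def permMatrix {G G' : Type*} (π : G' ≃ G) : Matrix G G' ℝ :=
  Matrix.of fun x y => if x = π y then 1 else 0

/-- The matrix `D^π`: the correlation matrix of the `(G,G')`-invariant correlation
`p_G ∘ p_π ∘ p_{G'}`. -/
noncomputable def Dpi {G G' : Type*} [Group G] [Group G'] [Fintype G] [Fintype G']
    (π : G' ≃ G) : Matrix G G' ℝ :=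
  corrMatrix (corComp (pUnif G) (corComp (detCor π) (pUnif G')))

/-- For a winning correlation `p` for the `(G,G')`-bijection game,
there exists a classical winning correlation (a convex combination of the deterministic
correlations `p_π`) whose support is contained in that of `p` iff there is a bijection
`π ∈ bij(G,G')` with `p(π(a),π(c)|a,c) ≠ 0` for all `a,c ∈ G'` (i.e. the support graph of
`p` contains a clique of size `|G|`). -/
theorem stmt18 {G G' : Type*} [Group G] [Group G'] [Fintype G] [Fintype G']
    [DecidableEq G] [DecidableEq G']
    (hcard : Fintype.card G = Fintype.card G')
    (p : G → G → G' → G' → ℝ) (hp : IsWinningCorrelation p) :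
    (∃ α : (G' ≃ G) → ℝ,
      (∀ π : G' ≃ G, 0 ≤ α π) ∧ (∑ π : G' ≃ G, α π = 1) ∧
      (∀ (b d : G) (a c : G'),
        0 < ∑ π : G' ≃ G, α π * detCor π b d a c → 0 < p b d a c)) ↔
    ∃ π : G' ≃ G, ∀ a c : G', p (π a) (π c) a c ≠ 0 := by
  obtain ⟨hnn, hsum, hzero⟩ := hp
  constructor
  · rintro ⟨α, hα0, hα1, hsupp⟩
    obtain ⟨π, hπ⟩ : ∃ π : G' ≃ G, 0 < α π := by
      by_contra h
      push_neg at h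
      have hz : ∑ π : G' ≃ G, α π = 0 :=
        Finset.sum_eq_zero fun π _ => le_antisymm (h π) (hα0 π)
      rw [hz] at hα1
      exact zero_ne_one hα1
    refine ⟨π, fun a c => ?_⟩
    have hpos : 0 < ∑ π' : G' ≃ G, α π' * detCor π' (π a) (π c) a c := by
      apply Finset.sum_pos'
      · intro i _
        refine mul_nonneg (hα0 i) ?_
        unfold detCor
        positivity
      · exact ⟨π, Finset.mem_univ _, by simp [detCor, hπ]⟩
    exact (hsupp _ _ _ _ hpos).ne'
  · rintro ⟨π, hπ⟩
    refine ⟨fun σ => if σ = π then 1 else 0, fun σ => by positivity, by simp, ?_⟩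
    intro b d a c hpos
    have heq : (∑ σ : G' ≃ G, (if σ = π then (1:ℝ) else 0) * detCor σ b d a c)
        = detCor π b d a c := by
      simp [ite_mul]
    rw [heq] at hpos
    unfold detCor at hpos
    split_ifs at hpos with h
    · obtain ⟨hb, hd⟩ := h
      subst hb; subst hd
      exact (hnn _ _ _ _).lt_of_ne (Ne.symm (hπ a c))
    · exact absurd hpos (lt_irrefl 0)
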